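/- Suppose m ≥ 3 and λ_i = 1/m for every i ∈ I, let T_1,…,T_m and Q_1,…,Q_m be firmly nonexpansive maps on X satisfying, for every i and all z, y ∈ X, y = Q_i(z) ⟺ y = T_i(μ_i z + λ_i y). Let x_0 ∈ 𝐗 and define x_{n+1} = (J∘R)x_n for all n. If S ≠ ∅, then the sequence (x_n) converges weakly in 𝐗 to a point x = (x_i)_{i∈I} ∈ S, and the averages (1/m)Σ_{i∈I} x_{n,i} converge weakly in X to (1/m)Σ_{i∈I} x_i, which is a fixed point of the averaged resolvent, i.e. it satisfies z = (1/m)Σ_{i∈I} T_i z. -/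

import Mathlib

/-!
`J` is firmly nonexpansive coordinatewise, and `R` satisfies the exact identity
`‖R a - R b‖² + (m - 2)/m ‖(a - b) - (R a - R b)‖² = ‖a - b‖²`, so for `m ≥ 3` the composition
`J ∘ R` is averaged. The iterates of an averaged map with a fixed point are Fejér monotone and
asymptotically regular; by demiclosedness every weak cluster point is a fixed point, and Opial's
lemma turns this into weak convergence of the whole sequence. The compatibility of `Q i` with `T i`
identifies `Fix (J ∘ R)` with `S`, and the averages converge weakly as images of the iterates under
a continuous linear map.
-/

open Filter Topology Function
open scoped RealInnerProductSpace

section Averaged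

variable {H : Type*} [NormedAddCommGroup H]

/-- `F` is `α`-averaged iff `AveragedWith ((1 - α) / α) F`; firmly nonexpansive means
`AveragedWith 1 F`. -/
def AveragedWith (κ : ℝ) (F : H → H) : Prop :=
  ∀ a b, ‖F a - F b‖ ^ 2 + κ * ‖(a - F a) - (b - F b)‖ ^ 2 ≤ ‖a - b‖ ^ 2

namespace AveragedWith

variable {κ : ℝ} {F : H → H} {x : ℕ → H}

theorem lipschitzWith_one (hF : AveragedWith κ F) (hκ : 0 ≤ κ) : LipschitzWith 1 F := by
  refine LipschitzWith.of_dist_le_mul fun a b => ?_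
  rw [dist_eq_norm, dist_eq_norm, NNReal.coe_one, one_mul]
  have := hF a b
  exact le_of_sq_le_sq (by nlinarith [mul_nonneg hκ (sq_nonneg ‖(a - F a) - (b - F b)‖)])
    (norm_nonneg _)

/-- The constant is the harmonic-type combination `κ₁ κ₂ / (κ₁ + κ₂)`, from
`(s + t)² ≤ (1/κ₁ + 1/κ₂)(κ₁ t² + κ₂ s²)`. -/
theorem comp {κ₁ κ₂ : ℝ} {F G : H → H} (hF : AveragedWith κ₁ F) (hG : AveragedWith κ₂ G)
(h₁ : 0 < κ₁) (h₂ : 0 < κ₂) :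
    AveragedWith (κ₁ * κ₂ / (κ₁ + κ₂)) (F ∘ G) := by
  intro a b
  set s := ‖(a - b) - (G a - G b)‖
  set t := ‖(G a - G b) - (F (G a) - F (G b))‖
  have hFG := hF (G a) (G b)
  have hGab := hG a b
  rw [show G a - F (G a) - (G b - F (G b)) = G a - G b - (F (G a) - F (G b)) by abel] at hFG
  rw [show a - G a - (b - G b) = a - b - (G a - G b) by abel] at hGab
  have htri : ‖(a - (F ∘ G) a) - (b - (F ∘ G) b)‖ ≤ s + t := by
    rw [show a - (F ∘ G) a - (b - (F ∘ G) b)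
        = (a - b - (G a - G b)) + (G a - G b - (F (G a) - F (G b))) by
      simp only [comp_apply]; abel]
    exact norm_add_le _ _
  have hsum : κ₁ * κ₂ / (κ₁ + κ₂) * (s + t) ^ 2 ≤ κ₂ * s ^ 2 + κ₁ * t ^ 2 := by
    rw [div_mul_eq_mul_div, div_le_iff₀ (by positivity)]
    nlinarith [sq_nonneg (κ₂ * s - κ₁ * t)]
  have hmono := pow_le_pow_left₀ (norm_nonneg _) htri 2
  simp only [comp_apply] at hmono ⊢
  nlinarith [mul_le_mul_of_nonneg_left hmono (by positivity : 0 ≤ κ₁ * κ₂ / (κ₁ + κ₂))]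

theorem piLp {ι : Type*} [Fintype ι] {E : ι → Type*} [∀ i, NormedAddCommGroup (E i)]
    {Q : ∀ i, E i → E i} (hQ : ∀ i, AveragedWith κ (Q i)) {J : PiLp 2 E → PiLp 2 E}
    (hJ : ∀ y i, J y i = Q i (y i)) : AveragedWith κ J := by
  intro a b
  simp only [PiLp.norm_sq_eq_of_L2, Finset.mul_sum, ← Finset.sum_add_distrib]
  exact Finset.sum_le_sum fun i _ => by simpa [hJ] using hQ i (a i) (b i)

theorem norm_sub_sq_add_le (hF : AveragedWith κ F) {z : H} (hz : IsFixedPt F z) (a : H) :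
‖F a - z‖ ^ 2 + κ * ‖a - F a‖ ^ 2 ≤ ‖a - z‖ ^ 2 := by
  simpa [hz.eq] using hF a z

theorem antitone_norm_sub (hF : AveragedWith κ F) (hκ : 0 ≤ κ)
    (hx : ∀ n, x (n + 1) = F (x n)) {z : H} (hz : IsFixedPt F z) : Antitone fun n => ‖x n - z‖ := by
  refine antitone_nat_of_succ_le fun n => ?_
  have h := hF.norm_sub_sq_add_le hz (x n)
  rw [← hx n] at h
  exact le_of_sq_le_sq (by nlinarith [mul_nonneg hκ (sq_nonneg ‖x n - F (x n)‖)]) (norm_nonneg _)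

theorem tendsto_norm_sub (hF : AveragedWith κ F) (hκ : 0 ≤ κ)
    (hx : ∀ n, x (n + 1) = F (x n)) {z : H} (hz : IsFixedPt F z) :
    Tendsto (fun n => ‖x n - z‖) atTop (𝓝 (⨅ n, ‖x n - z‖)) :=
  tendsto_atTop_ciInf (hF.antitone_norm_sub hκ hx hz) ⟨0, by rintro _ ⟨n, rfl⟩; positivity⟩

/-- Asymptotic regularity: `κ ‖x n - x (n + 1)‖²` is bounded by the decrease of
`‖x n - z‖²`, which tends to `0`. -/
theorem tendsto_norm_sub_apply (hF : AveragedWith κ F) (hκ : 0 < κ)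
    (hx : ∀ n, x (n + 1) = F (x n)) {z : H} (hz : IsFixedPt F z) :
    Tendsto (fun n => ‖x n - F (x n)‖) atTop (𝓝 0) := by
  have hd := (hF.tendsto_norm_sub hκ.le hx hz).pow 2
  have hdec : Tendsto (fun n => (‖x n - z‖ ^ 2 - ‖x (n + 1) - z‖ ^ 2) / κ) atTop (𝓝 0) := by
    simpa using (hd.sub (hd.comp (tendsto_add_atTop_nat 1))).div_const κ
  have hsq : Tendsto (fun n => ‖x n - F (x n)‖ ^ 2) atTop (𝓝 0) := by
    refine squeeze_zero (fun n => sq_nonneg _) (fun n => ?_) hdec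
    rw [le_div_iff₀ hκ, hx n]
    nlinarith [hF.norm_sub_sq_add_le hz (x n)]
  simpa [Real.sqrt_sq (norm_nonneg _)] using hsq.sqrt

end AveragedWith

end Averaged

section Hilbert

variable {H : Type*} [NormedAddCommGroup H] [InnerProductSpace ℝ H]

def WeakTendsto {α : Type*} (x : α → H) (l : Filter α) (z : H) : Prop :=
  ∀ u, Tendsto (fun n => ⟪x n, u⟫) l (𝓝 ⟪z, u⟫)

theorem WeakTendsto.map_continuousLinearMap [CompleteSpace H] {K : Type*}
    [NormedAddCommGroup K] [InnerProductSpace ℝ K] [CompleteSpace K] {α : Type*} {x : α → H}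
    {l : Filter α} {z : H}
    (hx : WeakTendsto x l z) (A : H →L[ℝ] K) : WeakTendsto (fun n => A (x n)) l (A z) := by
  intro u
  simpa only [ContinuousLinearMap.adjoint_inner_right] using hx (ContinuousLinearMap.adjoint A u)

/-- Banach–Alaoglu, through the Riesz isomorphism `H ≃ H⋆`. -/
theorem exists_weakTendsto_of_bounded [CompleteSpace H] {α : Type*} {x : α → H} {B : ℝ}
    (hb : ∀ n, ‖x n‖ ≤ B) (U : Ultrafilter α) : ∃ z, WeakTendsto x U z := by
  let φ : α → WeakDual ℝ H := fun n =>
    StrongDual.toWeakDual (InnerProductSpace.toDual ℝ H (x n))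
  have hφ : (U.map φ : Filter (WeakDual ℝ H)) ≤
      𝓟 (WeakDual.toStrongDual ⁻¹' Metric.closedBall 0 B) := by
    rw [Ultrafilter.coe_map, le_principal_iff, mem_map]
    exact univ_mem' fun n => by simpa [φ] using hb n
  obtain ⟨φ₀, -, hφ₀⟩ :=
    (WeakDual.isCompact_closedBall (0 : StrongDual ℝ H) B).ultrafilter_le_nhds _ hφ
  refine ⟨(InnerProductSpace.toDual ℝ H).symm (WeakDual.toStrongDual φ₀), fun u => ?_⟩
  rw [InnerProductSpace.toDual_symm_apply]
  exact ((WeakDual.eval_continuous u).tendsto φ₀).comp hφ₀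

theorem WeakTendsto.eq_of_tendsto_norm_sub {α : Type*} {x : α → H} {l L₁ L₂ : Filter α}
    [L₁.NeBot] [L₂.NeBot] (h₁ : L₁ ≤ l) (h₂ : L₂ ≤ l) {z₁ z₂ : H} {ℓ₁ ℓ₂ : ℝ}
    (hd₁ : Tendsto (fun n => ‖x n - z₁‖) l (𝓝 ℓ₁)) (hd₂ : Tendsto (fun n => ‖x n - z₂‖) l (𝓝 ℓ₂))
    (hx₁ : WeakTendsto x L₁ z₁) (hx₂ : WeakTendsto x L₂ z₂) : z₁ = z₂ := by
  set w := z₂ - z₁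
  have hpol : ∀ n, ⟪x n, w⟫ = (‖x n - z₁‖ ^ 2 - ‖x n - z₂‖ ^ 2 + ‖z₂‖ ^ 2 - ‖z₁‖ ^ 2) / 2 := by
    intro n
    simp only [w, norm_sub_sq_real, inner_sub_right]
    ring
  have hlim : Tendsto (fun n => ⟪x n, w⟫) l
      (𝓝 ((ℓ₁ ^ 2 - ℓ₂ ^ 2 + ‖z₂‖ ^ 2 - ‖z₁‖ ^ 2) / 2)) := by
    simp only [hpol]
    exact ((((hd₁.pow 2).sub (hd₂.pow 2)).add_const _).sub_const _).div_const _
  have e₁ := tendsto_nhds_unique (hx₁ w) (hlim.mono_left h₁)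
  have e₂ := tendsto_nhds_unique (hx₂ w) (hlim.mono_left h₂)
  have hw : ⟪w, w⟫ = 0 := by rw [inner_sub_left, e₁, e₂, sub_self]
  exact (sub_eq_zero.mp (inner_self_eq_zero.mp hw)).symm

/-- Opial's lemma. -/
theorem exists_weakTendsto_of_tendsto_norm_sub [CompleteSpace H] {α : Type*} {x : α → H}
    {l : Filter α} [l.NeBot] {B : ℝ} (hb : ∀ n, ‖x n‖ ≤ B) {C : Set H}
    (hdist : ∀ z ∈ C, ∃ ℓ, Tendsto (fun n => ‖x n - z‖) l (𝓝 ℓ))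
    (hclus : ∀ (U : Ultrafilter α) z, ↑U ≤ l → WeakTendsto x U z → z ∈ C) :
    ∃ p ∈ C, WeakTendsto x l p := by
  have hmem : ∀ (U : Ultrafilter α), ↑U ≤ l → ∃ z ∈ C, WeakTendsto x U z := fun U hU =>
    let ⟨z, hz⟩ := exists_weakTendsto_of_bounded hb U
    ⟨z, hclus U z hU hz, hz⟩
  obtain ⟨p, hpC, hp⟩ := hmem (Ultrafilter.of l) (Ultrafilter.of_le l)
  obtain ⟨ℓ, hℓ⟩ := hdist p hpC
  refine ⟨p, hpC, fun u => (tendsto_iff_ultrafilter _ _ _).mpr fun U hU => ?_⟩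
  obtain ⟨z, hzC, hz⟩ := hmem U hU
  obtain ⟨ℓ', hℓ'⟩ := hdist z hzC
  rw [hz.eq_of_tendsto_norm_sub hU (Ultrafilter.of_le l) hℓ' hℓ hp] at hz
  exact hz u

/-- Demiclosedness of `id - F` at `0`. -/
theorem LipschitzWith.isFixedPt_of_weakTendsto {F : H → H} (hF : LipschitzWith 1 F)
    {α : Type*} {x : α → H} {l : Filter α} [l.NeBot] {B : ℝ} (hb : ∀ n, ‖x n‖ ≤ B) {z : H}
    (hx : WeakTendsto x l z) (hreg : Tendsto (fun n => ‖x n - F (x n)‖) l (𝓝 0)) :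
    IsFixedPt F z := by
  set w := z - F z
  set g : α → ℝ := fun n =>
    -2 * ⟪x n - z, w⟫ + ‖x n - F (x n)‖ * (2 * (B + ‖z‖) + ‖x n - F (x n)‖)
  have hle : ∀ n, ‖w‖ ^ 2 ≤ g n := by
    intro n
    have hexp : ‖x n - F z‖ ^ 2 = ‖x n - z‖ ^ 2 + 2 * ⟪x n - z, w⟫ + ‖w‖ ^ 2 := by
      rw [show x n - F z = (x n - z) + w by simp only [w]; abel, norm_add_sq_real]
    have htri : ‖x n - F z‖ ≤ ‖x n - F (x n)‖ + ‖x n - z‖ := by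
      calc ‖x n - F z‖ = ‖(x n - F (x n)) + (F (x n) - F z)‖ := by rw [sub_add_sub_cancel]
        _ ≤ ‖x n - F (x n)‖ + ‖F (x n) - F z‖ := norm_add_le _ _
        _ ≤ ‖x n - F (x n)‖ + ‖x n - z‖ := by
          gcongr
          simpa [dist_eq_norm] using hF.dist_le_mul (x n) z
    have hbz : ‖x n - z‖ ≤ B + ‖z‖ := (_root_.norm_sub_le _ _).trans (by linarith [hb n])
    have hsq := pow_le_pow_left₀ (norm_nonneg _) htri 2
    nlinarith [norm_nonneg (x n - F (x n)), norm_nonneg (x n - z),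
      mul_le_mul_of_nonneg_left hbz (norm_nonneg (x n - F (x n)))]
  have hg : Tendsto g l (𝓝 0) := by
    have hin : Tendsto (fun n => ⟪x n - z, w⟫) l (𝓝 0) := by
      simpa only [inner_sub_left, sub_self] using (hx w).sub_const ⟪z, w⟫
    simpa [g] using (hin.const_mul (-2)).add (hreg.mul (hreg.const_add (2 * (B + ‖z‖))))
  have hw : ‖w‖ ^ 2 ≤ 0 := ge_of_tendsto' hg hle
  exact (sub_eq_zero.mp (norm_eq_zero.mp (by nlinarith [norm_nonneg w]))).symm

theorem AveragedWith.exists_weakTendsto_of_iterate [CompleteSpace H] {κ : ℝ} {F : H → H}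
    (hF : AveragedWith κ F) (hκ : 0 < κ) {x : ℕ → H} (hx : ∀ n, x (n + 1) = F (x n)) {q : H}
    (hq : IsFixedPt F q) :
    ∃ p, IsFixedPt F p ∧ WeakTendsto x atTop p := by
  have hb : ∀ n, ‖x n‖ ≤ ‖q‖ + ‖x 0 - q‖ := fun n =>
    calc ‖x n‖ ≤ ‖q‖ + ‖x n - q‖ := by simpa using norm_add_le q (x n - q)
      _ ≤ ‖q‖ + ‖x 0 - q‖ := by gcongr; exact hF.antitone_norm_sub hκ.le hx hq (Nat.zero_le n)
  exact exists_weakTendsto_of_tendsto_norm_sub hb (C := fixedPoints F)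
    (fun z hz => ⟨_, hF.tendsto_norm_sub hκ.le hx hz⟩)
    (fun U z hU hz => (hF.lipschitzWith_one hκ.le).isFixedPt_of_weakTendsto hb hz
      ((hF.tendsto_norm_sub_apply hκ hx hq).mono_left hU))

end Hilbert

section Product

variable {X : Type*} [NormedAddCommGroup X] [InnerProductSpace ℝ X]

theorem sum_norm_smul_sub_sum_sq {ι : Type*} [Fintype ι] (d : ι → X) (a : ℝ) :
    ∑ i, ‖a • d i - ∑ j, d j‖ ^ 2
      = a ^ 2 * ∑ i, ‖d i‖ ^ 2 + (Fintype.card ι - 2 * a) * ‖∑ j, d j‖ ^ 2 := by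
  have hinner : ∑ i, ⟪a • d i, ∑ j, d j⟫ = a * ‖∑ j, d j‖ ^ 2 := by
    rw [← sum_inner, ← Finset.smul_sum, real_inner_smul_left, real_inner_self_eq_norm_sq]
  simp only [norm_sub_sq_real, Finset.sum_add_distrib, Finset.sum_sub_distrib, ← Finset.mul_sum,
    hinner, norm_smul, mul_pow, Real.norm_eq_abs, sq_abs, Finset.sum_const, Finset.card_univ,
    nsmul_eq_mul]
  ring

variable {m : ℕ} {R : PiLp 2 (fun _ : Fin m => X) → PiLp 2 (fun _ : Fin m => X)}

/-- In fact equality holds: `R` acts on the `i`-th coordinate of `d = a - b` as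
`d i ↦ (∑ d - d i) / (m - 1)`, and `sum_norm_smul_sub_sum_sq` evaluates both sides. -/
theorem averagedWith_of_sum_erase (hm : 2 ≤ m)
    (hR : ∀ x i, R x i = ((m : ℝ) - 1)⁻¹ • ∑ j ∈ Finset.univ.erase i, x j) :
    AveragedWith (((m : ℝ) - 2) / m) R := by
  intro a b
  have hm1 : (m : ℝ) - 1 ≠ 0 := by
    have : (2 : ℝ) ≤ m := by exact_mod_cast hm
    linarith
  have hm0 : (m : ℝ) ≠ 0 := by positivity
  set d : Fin m → X := fun i => a i - b i
  have hRd : ∀ i, (R a - R b) i = -((m : ℝ) - 1)⁻¹ • ((1 : ℝ) • d i - ∑ j, d j) := by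
    intro i
    simp only [PiLp.sub_apply, hR, Finset.sum_erase_eq_sub (Finset.mem_univ _), d,
      Finset.sum_sub_distrib]
    module
  have hdRd : ∀ i,
      (a - R a - (b - R b)) i = ((m : ℝ) - 1)⁻¹ • ((m : ℝ) • d i - ∑ j, d j) := by
    intro i
    simp only [PiLp.sub_apply, hR, Finset.sum_erase_eq_sub (Finset.mem_univ _), d,
      Finset.sum_sub_distrib]
    match_scalars <;> field_simp <;> ring
  have hnorm : ∀ (c : ℝ) (v : PiLp 2 (fun _ : Fin m => X)) (e : ℝ),
      (∀ i, v i = c • (e • d i - ∑ j, d j)) →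
      ‖v‖ ^ 2 = c ^ 2 * (e ^ 2 * ∑ i, ‖d i‖ ^ 2 + (m - 2 * e) * ‖∑ j, d j‖ ^ 2) := by
    intro c v e hv
    simp only [PiLp.norm_sq_eq_of_L2, hv, norm_smul, mul_pow, Real.norm_eq_abs, sq_abs,
      ← Finset.mul_sum, sum_norm_smul_sub_sum_sq, Fintype.card_fin]
  refine le_of_eq ?_
  have hab : ‖a - b‖ ^ 2 = ∑ i, ‖d i‖ ^ 2 := PiLp.norm_sq_eq_of_L2 _ _
  rw [hnorm _ _ _ hRd, hnorm _ _ _ hdRd, hab]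
  field_simp
  ring

theorem isFixedPt_comp_iff {T Q : Fin m → X → X}
    {J : PiLp 2 (fun _ : Fin m => X) → PiLp 2 (fun _ : Fin m => X)} (hm : 2 ≤ m)
    (hTQ : ∀ (i : Fin m) (z y : X),
      y = Q i z ↔ y = T i ((((m : ℝ) - 1) / m) • z + (1 / m : ℝ) • y))
    (hR : ∀ x i, R x i = ((m : ℝ) - 1)⁻¹ • ∑ j ∈ Finset.univ.erase i, x j)
    (hJ : ∀ x i, J x i = Q i (x i)) (p : PiLp 2 (fun _ : Fin m => X)) :
    IsFixedPt (J ∘ R) p ↔ ∀ i, p i = T i ((1 / m : ℝ) • ∑ j, p j) := by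
  have hm1 : (m : ℝ) - 1 ≠ 0 := by
    have : (2 : ℝ) ≤ m := by exact_mod_cast hm
    linarith
  have hm0 : (m : ℝ) ≠ 0 := by positivity
  have hcomb : ∀ i,
      (((m : ℝ) - 1) / m) • R p i + (1 / m : ℝ) • p i = (1 / m : ℝ) • ∑ j, p j := by
    intro i
    rw [hR, Finset.sum_erase_eq_sub (Finset.mem_univ _)]
    match_scalars
    · field_simp
    · field_simp
      ring
  simp only [IsFixedPt, comp_apply, PiLp.ext_iff, hJ]
  refine forall_congr' fun i => ?_
  rw [eq_comm, hTQ, hcomb]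

end Product

theorem weak_convergence_of_JR_iterates_general
    {X : Type*} [NormedAddCommGroup X] [InnerProductSpace ℝ X] [CompleteSpace X]
    (m : ℕ) (hm : 3 ≤ m)
    (T Q : Fin m → X → X)
    (hQ : ∀ i x y, ‖Q i x - Q i y‖ ^ 2 + ‖(x - Q i x) - (y - Q i y)‖ ^ 2 ≤ ‖x - y‖ ^ 2)
    (hTQ : ∀ (i : Fin m) (z y : X),
      y = Q i z ↔ y = T i ((((m : ℝ) - 1) / m) • z + (1 / m : ℝ) • y))
    (R J : PiLp 2 (fun _ : Fin m => X) → PiLp 2 (fun _ : Fin m => X))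
    (hR : ∀ x i, R x i = ((m : ℝ) - 1)⁻¹ • ∑ j ∈ Finset.univ.erase i, x j)
    (hJ : ∀ x i, J x i = Q i (x i))
    (x : ℕ → PiLp 2 (fun _ : Fin m => X))
    (hrec : ∀ n, x (n + 1) = J (R (x n)))
    (hS : ∃ p : Fin m → X, ∀ i, p i = T i ((1 / m : ℝ) • ∑ j, p j)) :
    ∃ p : PiLp 2 (fun _ : Fin m => X),
      (∀ i, p i = T i ((1 / m : ℝ) • ∑ j, p j)) ∧
      (∀ u : PiLp 2 (fun _ : Fin m => X),
        Filter.Tendsto (fun n => (inner ℝ (x n) u : ℝ)) Filter.atTop (nhds (inner ℝ p u))) ∧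
      (∀ u : X,
        Filter.Tendsto (fun n => (inner ℝ ((1 / m : ℝ) • ∑ i, x n i) u : ℝ)) Filter.atTop
          (nhds (inner ℝ ((1 / m : ℝ) • ∑ i, p i) u))) ∧
      ((1 / m : ℝ) • ∑ i, p i) = (1 / m : ℝ) • ∑ i, T i ((1 / m : ℝ) • ∑ j, p j) := by
  have hm2 : 2 ≤ m := by omega
  have hc : 0 < ((m : ℝ) - 2) / m := by
    have : (3 : ℝ) ≤ m := by exact_mod_cast hm
    exact div_pos (by linarith) (by linarith)
  have hJR : AveragedWith _ (J ∘ R) :=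
    (AveragedWith.piLp (fun i => by simpa [AveragedWith] using hQ i) hJ).comp
      (averagedWith_of_sum_erase hm2 hR) one_pos hc
  have hfix := isFixedPt_comp_iff hm2 hTQ hR hJ
  obtain ⟨p₀, hp₀⟩ := hS
  obtain ⟨p, hpfix, hconv⟩ := hJR.exists_weakTendsto_of_iterate (by positivity) hrec
    ((hfix (WithLp.toLp 2 p₀)).mpr hp₀)
  have hpS := (hfix p).mp hpfix
  let avg : PiLp 2 (fun _ : Fin m => X) →L[ℝ] X := (1 / m : ℝ) • ∑ i, PiLp.proj 2 _ i
  refine ⟨p, hpS, hconv, ?_, by simp_rw [← hpS]⟩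
  simpa [avg, WeakTendsto] using hconv.map_continuousLinearMap avg

/-- For `m ≥ 3` and equal weights `1/m`, under the compatibility
hypothesis relating `Q i` and `T i`, the iterates `x_{n+1} = (J ∘ R) x_n`
converge weakly to a point `p ∈ S`, and the averages `(1/m) ∑ i, x_n i` converge
weakly to `(1/m) ∑ i, p i`, which is a fixed point of the averaged resolvent. -/
theorem weak_convergence_of_JR_iterates
    {X : Type*} [NormedAddCommGroup X] [InnerProductSpace ℝ X] [CompleteSpace X]
    (m : ℕ) (hm : 3 ≤ m)
    (T Q : Fin m → X → X)
    (hT : ∀ i x y, ‖T i x - T i y‖ ^ 2 + ‖(x - T i x) - (y - T i y)‖ ^ 2 ≤ ‖x - y‖ ^ 2)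
    (hQ : ∀ i x y, ‖Q i x - Q i y‖ ^ 2 + ‖(x - Q i x) - (y - Q i y)‖ ^ 2 ≤ ‖x - y‖ ^ 2)
    (hTQ : ∀ (i : Fin m) (z y : X),
      y = Q i z ↔ y = T i ((((m : ℝ) - 1) / m) • z + (1 / m : ℝ) • y))
    (R J : PiLp 2 (fun _ : Fin m => X) → PiLp 2 (fun _ : Fin m => X))
    (hR : ∀ x i, R x i = ((m : ℝ) - 1)⁻¹ • ∑ j ∈ Finset.univ.erase i, x j)
    (hJ : ∀ x i, J x i = Q i (x i))
    (x : ℕ → PiLp 2 (fun _ : Fin m => X))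
    (hrec : ∀ n, x (n + 1) = J (R (x n)))
    (hS : ∃ p : Fin m → X, ∀ i, p i = T i ((1 / m : ℝ) • ∑ j, p j)) :
    ∃ p : PiLp 2 (fun _ : Fin m => X),
      (∀ i, p i = T i ((1 / m : ℝ) • ∑ j, p j)) ∧
      (∀ u : PiLp 2 (fun _ : Fin m => X),
        Filter.Tendsto (fun n => (inner ℝ (x n) u : ℝ)) Filter.atTop (nhds (inner ℝ p u))) ∧
      (∀ u : X,
        Filter.Tendsto (fun n => (inner ℝ ((1 / m : ℝ) • ∑ i, x n i) u : ℝ)) Filter.atTop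
          (nhds (inner ℝ ((1 / m : ℝ) • ∑ i, p i) u))) ∧
      ((1 / m : ℝ) • ∑ i, p i) = (1 / m : ℝ) • ∑ i, T i ((1 / m : ℝ) • ∑ j, p j) :=
  weak_convergence_of_JR_iterates_general m hm T Q hQ hTQ R J hR hJ x hrec hS
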